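/- arXiv:2304.09306 — 2 statements merged into one kernel-verified Lean document; each statement's English description precedes it below -/
import Mathlib

section
/- Let X ⊂ ℙ^5 over 𝔽_2 be defined by the reductions mod 2 of Q1 = u*v + u*w - 4*v*w + 2*v*z + 2*w*z + x^2 - 2*x*z + y^2 - z^2 and Q2 = u*v - u*w + u*y - 2*v^2 + 2*v*x - 2*w*y + 2*w*z + 2*x*z. Then the ideal (Q1 mod 2, Q2 mod 2) ⊂ 𝔽_2[u,v,w,x,y,z] is not radical, i.e. the scheme X mod 2 is non-reduced: there exists a polynomial g ∉ (Q1, Q2) mod 2 with g^2 ∈ (Q1, Q2) mod 2. -/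
open MvPolynomial

/-- The reduction of `Q1` mod 2, in the variables `(u,v,w,x,y,z) = (X 0, …, X 5)`. -/
noncomputable def Q1mod2 : MvPolynomial (Fin 6) (ZMod 2) :=
  X 0 * X 1 + X 0 * X 2 - 4 * X 1 * X 2 + 2 * X 1 * X 5 + 2 * X 2 * X 5 + X 3 ^ 2 -
    2 * X 3 * X 5 + X 4 ^ 2 - X 5 ^ 2

/-- The reduction of `Q2` mod 2. -/
noncomputable def Q2mod2 : MvPolynomial (Fin 6) (ZMod 2) :=
  X 0 * X 1 - X 0 * X 2 + X 0 * X 4 - 2 * X 1 ^ 2 + 2 * X 1 * X 3 - 2 * X 2 * X 4 +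
    2 * X 2 * X 5 + 2 * X 3 * X 5

lemma two_eq_zero' : (2 : MvPolynomial (Fin 6) (ZMod 2)) = 0 := by
  have h : (2 : MvPolynomial (Fin 6) (ZMod 2)) = C 1 + C 1 := by rw [C_1]; ring
  rw [h, ← C_add, show (1 : ZMod 2) + 1 = 0 from rfl, C_0]

lemma Q1_eq : Q1mod2 = X 0 * X 1 + X 0 * X 2 + X 3 ^ 2 + X 4 ^ 2 + X 5 ^ 2 := by
  rw [Q1mod2]
  linear_combination (-(2 : MvPolynomial (Fin 6) (ZMod 2)) * X 1 * X 2 + X 1 * X 5 +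
    X 2 * X 5 - X 3 * X 5 - X 5 ^ 2) * two_eq_zero'

lemma Q2_eq : Q2mod2 = X 0 * X 1 + X 0 * X 2 + X 0 * X 4 := by
  rw [Q2mod2]
  linear_combination (-(X 0 : MvPolynomial (Fin 6) (ZMod 2)) * X 2 - X 1 ^ 2 + X 1 * X 3 -
    X 2 * X 4 + X 2 * X 5 + X 3 * X 5) * two_eq_zero'

open DualNumber in
/-- The ideal `(Q1 mod 2, Q2 mod 2) ⊂ 𝔽_2[u,v,w,x,y,z]` is not radical: the scheme
`X mod 2` is non-reduced; there is a `g ∉ (Q1, Q2)` with `g^2 ∈ (Q1, Q2)`. -/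
theorem stmt_9 :
    ¬ (Ideal.span {Q1mod2, Q2mod2}).IsRadical ∧
      ∃ g : MvPolynomial (Fin 6) (ZMod 2),
        g ∉ Ideal.span {Q1mod2, Q2mod2} ∧ g ^ 2 ∈ Ideal.span {Q1mod2, Q2mod2} := by
  set g : MvPolynomial (Fin 6) (ZMod 2) := (X 1 + X 2 + X 4) * (X 3 + X 4 + X 5) with hg
  have hnotmem : g ∉ Ideal.span {Q1mod2, Q2mod2} := by
    intro hmem
    rw [Ideal.mem_span_pair] at hmem
    obtain ⟨a, b, hab⟩ := hmem
    -- evaluate at (0,1,0,ε,0,0) in the dual numbers over ℤ/2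
    set pt : Fin 6 → DualNumber (ZMod 2) := ![0, 1, 0, ε, 0, 0] with hpt
    have e0 : pt 0 = 0 := rfl
    have e1 : pt 1 = 1 := rfl
    have e2 : pt 2 = 0 := rfl
    have e3 : pt 3 = ε := rfl
    have e4 : pt 4 = 0 := rfl
    have e5 : pt 5 = 0 := rfl
    have h2d : (2 : DualNumber (ZMod 2)) = 0 := rfl
    have h4d : (4 : DualNumber (ZMod 2)) = 0 := rfl
    have heps2 : (ε : DualNumber (ZMod 2)) ^ 2 = 0 := by rw [sq, eps_mul_eps]
    have key := congrArg (aeval pt) hab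
    simp only [map_add, map_sub, map_mul, map_pow, map_ofNat, aeval_X, Q1mod2, Q2mod2, hg,
      e0, e1, e2, e3, e4, e5, h2d, h4d, heps2, mul_zero, zero_mul, mul_one, one_mul, one_pow,
      add_zero, zero_add, sub_zero, zero_sub, neg_zero, sub_self, mul_neg, neg_mul] at key
    have := congrArg TrivSqZeroExt.snd key
    simp only [TrivSqZeroExt.snd_zero, snd_eps] at this
    exact zero_ne_one this
  have hsq : g ^ 2 ∈ Ideal.span {Q1mod2, Q2mod2} := by
    rw [Ideal.mem_span_pair]
    refine ⟨(X 1 + X 2 + X 4) ^ 2, (X 1 + X 2 + X 4) * (X 1 + X 2), ?_⟩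
    rw [Q1_eq, Q2_eq, hg]
    linear_combination ((X 0 : MvPolynomial (Fin 6) (ZMod 2)) * (X 1 + X 2 + X 4) ^ 2 *
      (X 1 + X 2) - (X 1 + X 2 + X 4) ^ 2 * (X 3 * X 4 + X 3 * X 5 + X 4 * X 5)) * two_eq_zero'
  refine ⟨?_, g, hnotmem, hsq⟩
  intro hrad
  exact hnotmem (hrad ⟨2, hsq⟩)
end

section
/- Let X = Q1 ∩ Q2 ⊂ ℙ^5_k be a smooth complete intersection of two quadrics over a field k of characteristic ≠ 2. If X contains a k-rational line, then X is k-rational, i.e., X is birational to ℙ^3_k. -/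
open Matrix MvPolynomial

/-- The quadratic form with Gram matrix `M`, as a polynomial in 6 variables. -/
noncomputable def quadricPoly {k : Type*} [CommRing k] (M : Matrix (Fin 6) (Fin 6) k) :
    MvPolynomial (Fin 6) k :=
  ∑ i : Fin 6, ∑ j : Fin 6, C (M i j) * X i * X j

namespace Stmt11Aux

variable {k : Type*} [CommRing k]

/-- linear form with coefficient vector `v` -/
noncomputable def linF {n : ℕ} (v : Fin n → k) : MvPolynomial (Fin n) k :=
  ∑ j, C (v j) * X j

lemma linF_isHomogeneous {n : ℕ} (v : Fin n → k) : (linF v).IsHomogeneous 1 := by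
  apply MvPolynomial.IsHomogeneous.sum
  intro j _
  simpa using (isHomogeneous_X k j).C_mul (v j)

lemma quadricPoly_isHomogeneous (M : Matrix (Fin 6) (Fin 6) k) :
    (quadricPoly M).IsHomogeneous 2 := by
  apply MvPolynomial.IsHomogeneous.sum
  intro i _
  apply MvPolynomial.IsHomogeneous.sum
  intro j _
  have : (X i * X j : MvPolynomial (Fin 6) k).IsHomogeneous 2 :=
    (isHomogeneous_X k i).mul (isHomogeneous_X k j)
  simpa [mul_assoc] using this.C_mul (M i j)

lemma eval_linF {n : ℕ} (v x : Fin n → k) : eval x (linF v) = v ⬝ᵥ x := by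
  simp [linF, dotProduct]

lemma eval_quadricPoly (M : Matrix (Fin 6) (Fin 6) k) (x : Fin 6 → k) :
    eval x (quadricPoly M) = x ⬝ᵥ M *ᵥ x := by
  simp only [quadricPoly, map_sum, _root_.map_mul, eval_C, eval_X, dotProduct, mulVec,
    Finset.mul_sum]
  refine Finset.sum_congr rfl fun i _ => Finset.sum_congr rfl fun j _ => by ring

lemma aeval_linF {n m : ℕ} (p : Fin n → MvPolynomial (Fin m) k) (v : Fin n → k) :
    aeval p (linF v) = ∑ j, C (v j) * p j := by
  simp [linF, MvPolynomial.algebraMap_eq]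

/-- substitution of an affine-ish combination into a linear form -/
lemma aeval_comb_linF (w v1 v2 : Fin 6 → k) (A B D : MvPolynomial (Fin 6) k) :
    aeval (fun i => C (v1 i) * A + C (v2 i) * B + D * X i) (linF w) =
      C (w ⬝ᵥ v1) * A + C (w ⬝ᵥ v2) * B + D * linF w := by
  simp only [linF, map_sum, _root_.map_mul, map_add, aeval_C, aeval_X,
    MvPolynomial.algebraMap_eq, dotProduct, Fin.sum_univ_six, C_add, C_mul]
  ring

/-- substitution of an affine-ish combination into a quadric -/
lemma aeval_comb_quadric (M : Matrix (Fin 6) (Fin 6) k) (hM : M.IsSymm)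
    (v1 v2 : Fin 6 → k) (A B D : MvPolynomial (Fin 6) k) :
    aeval (fun i => C (v1 i) * A + C (v2 i) * B + D * X i) (quadricPoly M) =
      C (v1 ⬝ᵥ M *ᵥ v1) * (A * A) + C (v2 ⬝ᵥ M *ᵥ v2) * (B * B)
      + 2 * C (v1 ⬝ᵥ M *ᵥ v2) * (A * B)
      + 2 * (A * D) * linF (M *ᵥ v1) + 2 * (B * D) * linF (M *ᵥ v2)
      + (D * D) * quadricPoly M := by
  have hsym : ∀ i j, M j i = M i j := fun i j => hM.apply i j
  simp only [quadricPoly, linF, map_sum, _root_.map_mul, map_add, aeval_C, aeval_X,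
    MvPolynomial.algebraMap_eq, dotProduct, mulVec, Fin.sum_univ_six, C_add, C_mul]
  simp only [hsym]
  ring

/-- sum of `C (δ_{tj}) * X j` -/
lemma sum_C_ite {n : ℕ} [NeZero n] (t : Fin n) :
    (∑ j, C (if t = j then (1 : k) else 0) * X j) = (X t : MvPolynomial (Fin n) k) := by
  simp [apply_ite C, ite_mul]

/-- extracting the degree-2 homogeneous component of a multiple of a quadric -/
lemma hc2_mul (p f : MvPolynomial (Fin 6) k) (hf : f.IsHomogeneous 2) :
    homogeneousComponent 2 (p * f) = C (p.coeff 0) * f := by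
  conv_lhs => rw [← sum_homogeneousComponent p]
  rw [Finset.sum_mul, map_sum]
  have hterm : ∀ i, homogeneousComponent 2 (homogeneousComponent i p * f)
      = if (2 : ℕ) = i + 2 then homogeneousComponent i p * f else 0 := by
    intro i
    exact homogeneousComponent_of_mem
      ((mem_homogeneousSubmodule _ _).mpr
        ((homogeneousComponent_isHomogeneous i p).mul hf))
  rw [Finset.sum_congr rfl fun i _ => hterm i]
  have hiff : ∀ i : ℕ, ((2 : ℕ) = i + 2) = (i = 0) := by
    intro i; simp only [eq_iff_iff]; omega
  simp only [hiff]
  rw [Finset.sum_ite_eq' (Finset.range _) 0 (fun i => homogeneousComponent i p * f)]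
  simp [homogeneousComponent_zero]

/-- linear functional vanishing on the kernel of another -/
lemma ker_incl {K : Type*} [Field K] {n : ℕ} {u u' : Fin n → K} (hu : u ≠ 0)
    (h : ∀ x, u ⬝ᵥ x = 0 → u' ⬝ᵥ x = 0) : ∃ c : K, u' = c • u := by
  classical
  obtain ⟨j, hj⟩ : ∃ j, u j ≠ 0 := by
    by_contra hc; push_neg at hc; exact hu (funext hc)
  refine ⟨u' j / u j, ?_⟩
  funext i
  have hdot : u ⬝ᵥ (u j • (Pi.single i 1 : Fin n → K) - u i • (Pi.single j 1 : Fin n → K)) = 0 := by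
    simp [dotProduct_sub, dotProduct_smul, dotProduct_single, smul_eq_mul, mul_comm]
  have hx := h _ hdot
  simp only [dotProduct_sub, dotProduct_smul, dotProduct_single, smul_eq_mul, mul_one] at hx
  have hx' : u j * u' i = u i * u' j := by linear_combination hx
  have : u' i = u i * u' j / u j := by
    field_simp
    linear_combination hx'
  simp only [Pi.smul_apply, smul_eq_mul, this]
  ring

end Stmt11Aux

set_option maxHeartbeats 1000000 in
set_option synthInstance.maxHeartbeats 200000 in
lemma sum_single_smul {k : Type*} [Field k] {n : ℕ} (x : Fin n → k) :
    ∑ j, x j • (Pi.single j (1 : k) : Fin n → k) = x := by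
  funext t
  simp [Finset.sum_apply, Pi.single_apply]

set_option maxHeartbeats 1000000 in
set_option synthInstance.maxHeartbeats 200000 in
lemma exists_proj {k : Type*} [Field k] (a b : Fin 6 → k)
    (hab : LinearIndependent k ![a, b]) :
    ∃ (Yc : Matrix (Fin 6) (Fin 4) k) (Gm : Matrix (Fin 4) (Fin 6) k) (s0 s1 : Fin 6 → k),
      Gm * Yc = 1 ∧
      (∀ t j, (Yc * Gm) t j =
        (if t = j then (1 : k) else 0) - a t * s0 j - b t * s1 j) ∧
      Gm *ᵥ a = 0 ∧ Gm *ᵥ b = 0 := by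
  classical
  let U : Submodule k (Fin 6 → k) := Submodule.span k (Set.range ![a, b])
  obtain ⟨W, hUW⟩ := Submodule.exists_isCompl U
  have hU2 : Module.finrank k U = 2 := by
    simpa using finrank_span_eq_card hab
  have h6 : Module.finrank k (Fin 6 → k) = 6 := by simp
  have hW4 : Module.finrank k W = 4 := by
    have h := Submodule.finrank_add_eq_of_isCompl hUW
    rw [hU2, h6] at h
    omega
  obtain ⟨e⟩ : Nonempty ((Fin 4 → k) ≃ₗ[k] W) :=
    FiniteDimensional.nonempty_linearEquiv_of_finrank_eq (by simp [hW4])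
  let B : Module.Basis (Fin 2) k U := Module.Basis.span hab
  let prU : (Fin 6 → k) →ₗ[k] U := U.linearProjOfIsCompl W hUW
  let prW : (Fin 6 → k) →ₗ[k] W := W.linearProjOfIsCompl U hUW.symm
  let ψ : (Fin 4 → k) →ₗ[k] (Fin 6 → k) := W.subtype ∘ₗ e.toLinearMap
  let φ : (Fin 6 → k) →ₗ[k] (Fin 4 → k) := e.symm.toLinearMap ∘ₗ prW
  have hψφ : ∀ x : Fin 6 → k, ψ (φ x) = (prW x : Fin 6 → k) := by
    intro x
    simp [ψ, φ]
  have hφψ : ∀ u : Fin 4 → k, φ (ψ u) = u := by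
    intro u
    have : prW ((e u : Fin 6 → k)) = e u :=
      Submodule.linearProjOfIsCompl_apply_left hUW.symm (e u)
    simp [φ, ψ, this]
  have hdec : ∀ x : Fin 6 → k,
      x = (B.repr (prU x) 0) • a + (B.repr (prU x) 1) • b + ψ (φ x) := by
    intro x
    have h1 : ((prU x : Fin 6 → k) + (prW x : Fin 6 → k)) = x :=
      Submodule.projection_add_projection_eq_self hUW x
    have e0 : (B 0 : Fin 6 → k) = a := by rw [show B = Module.Basis.span hab from rfl, Module.Basis.span_apply]; rfl
    have e1 : (B 1 : Fin 6 → k) = b := by rw [show B = Module.Basis.span hab from rfl, Module.Basis.span_apply]; rfl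
    have h2 := congrArg (fun u : U => (u : Fin 6 → k)) (B.sum_repr (prU x)).symm
    simp only [Fin.sum_univ_two, Submodule.coe_add, SetLike.val_smul, e0, e1] at h2
    rw [hψφ x, ← h2, h1]
  have f1 : ∀ (x : Fin 6 → k) (i : Fin 4),
      φ x i = ∑ j, φ (Pi.single j 1) i * x j := by
    intro x i
    have hx : φ x = ∑ j, x j • φ (Pi.single j 1) := by
      conv_lhs => rw [← sum_single_smul x]
      rw [map_sum]
      refine Finset.sum_congr rfl fun j _ => ?_
      exact LinearMap.map_smul φ (x j) _
    rw [hx]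
    simp [Finset.sum_apply, mul_comm]
  have f2 : ∀ (u : Fin 4 → k) (t : Fin 6),
      ψ u t = ∑ i, ψ (Pi.single i 1) t * u i := by
    intro u t
    have hx : ψ u = ∑ i, u i • ψ (Pi.single i 1) := by
      conv_lhs => rw [← sum_single_smul u]
      rw [map_sum]
      refine Finset.sum_congr rfl fun i _ => ?_
      exact LinearMap.map_smul ψ (u i) _
    rw [hx]
    simp [Finset.sum_apply, mul_comm]
  have haU : a ∈ U := Submodule.subset_span ⟨0, by simp⟩
  have hbU : b ∈ U := Submodule.subset_span ⟨1, by simp⟩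
  refine ⟨Matrix.of fun t i => ψ (Pi.single i 1) t, Matrix.of fun i j => φ (Pi.single j 1) i,
    fun j => B.repr (prU (Pi.single j 1)) 0, fun j => B.repr (prU (Pi.single j 1)) 1,
    ?_, ?_, ?_, ?_⟩
  · ext i i'
    rw [Matrix.mul_apply]
    simp only [Matrix.of_apply]
    have h := f1 (ψ (Pi.single i' 1)) i
    rw [hφψ] at h
    rw [← h]
    simp [Matrix.one_apply, Pi.single_apply]
  · intro t j
    rw [Matrix.mul_apply]
    simp only [Matrix.of_apply]
    have h := (f2 (φ (Pi.single j 1)) t).symm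
    rw [h]
    have hd := congrFun (hdec (Pi.single j 1)) t
    simp only [Pi.add_apply, Pi.smul_apply, smul_eq_mul, Pi.single_apply] at hd ⊢
    linear_combination -hd
  · funext i
    have : prW a = 0 := Submodule.linearProjOfIsCompl_apply_right' hUW.symm haU
    have hφa : φ a = 0 := by simp [φ, this]
    have := f1 a i
    rw [hφa] at this
    simp only [Pi.zero_apply] at this
    show (∑ j, φ (Pi.single j 1) i * a j) = 0
    exact this.symm
  · funext i
    have : prW b = 0 := Submodule.linearProjOfIsCompl_apply_right' hUW.symm hbU
    have hφb : φ b = 0 := by simp [φ, this]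
    have := f1 b i
    rw [hφb] at this
    simp only [Pi.zero_apply] at this
    show (∑ j, φ (Pi.single j 1) i * b j) = 0
    exact this.symm

namespace Stmt11Aux

variable {k : Type*} [CommRing k]

/-- the quadratic form `(aᵀM1 x)(bᵀM2 x) - (aᵀM2 x)(bᵀM1 x)` -/
noncomputable def lineQQ (M1 M2 : Matrix (Fin 6) (Fin 6) k) (a b : Fin 6 → k) :
    MvPolynomial (Fin 6) k :=
  linF (M1 *ᵥ a) * linF (M2 *ᵥ b) - linF (M2 *ᵥ a) * linF (M1 *ᵥ b)

noncomputable def lineAlpha (M1 M2 : Matrix (Fin 6) (Fin 6) k) (a b : Fin 6 → k) :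
    MvPolynomial (Fin 6) k :=
  quadricPoly M2 * linF (M1 *ᵥ b) - quadricPoly M1 * linF (M2 *ᵥ b)

noncomputable def lineBeta (M1 M2 : Matrix (Fin 6) (Fin 6) k) (a b : Fin 6 → k) :
    MvPolynomial (Fin 6) k :=
  linF (M2 *ᵥ a) * quadricPoly M1 - linF (M1 *ᵥ a) * quadricPoly M2

/-- the residual-intersection map `ℙ⁵ ⇢ X` -/
noncomputable def linePP (M1 M2 : Matrix (Fin 6) (Fin 6) k) (a b : Fin 6 → k) :
    Fin 6 → MvPolynomial (Fin 6) k := fun j =>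
  C (a j) * lineAlpha M1 M2 a b + C (b j) * lineBeta M1 M2 a b
    + (2 * lineQQ M1 M2 a b) * X j

lemma aeval_linePP_quadric (M1 M2 : Matrix (Fin 6) (Fin 6) k) (a b : Fin 6 → k) (hM1 : M1.IsSymm) (hM2 : M2.IsSymm)
    (sa1 : a ⬝ᵥ M1 *ᵥ a = 0) (sb1 : b ⬝ᵥ M1 *ᵥ b = 0) (sab1 : a ⬝ᵥ M1 *ᵥ b = 0)
    (sa2 : a ⬝ᵥ M2 *ᵥ a = 0) (sb2 : b ⬝ᵥ M2 *ᵥ b = 0) (sab2 : a ⬝ᵥ M2 *ᵥ b = 0) :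
    aeval (linePP M1 M2 a b) (quadricPoly M1) = 0 ∧
    aeval (linePP M1 M2 a b) (quadricPoly M2) = 0 := by
  have hP : linePP M1 M2 a b = fun j =>
      C (a j) * lineAlpha M1 M2 a b + C (b j) * lineBeta M1 M2 a b
        + (2 * lineQQ M1 M2 a b) * X j := rfl
  constructor
  · rw [hP, aeval_comb_quadric M1 hM1 a b _ _ _, sa1, sb1, sab1]
    simp only [map_zero, zero_mul, mul_zero, add_zero, zero_add]
    simp only [lineAlpha, lineBeta, lineQQ]
    ring
  · rw [hP, aeval_comb_quadric M2 hM2 a b _ _ _, sa2, sb2, sab2]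
    simp only [map_zero, zero_mul, mul_zero, add_zero, zero_add]
    simp only [lineAlpha, lineBeta, lineQQ]
    ring

lemma aeval_lineZZ (M1 M2 : Matrix (Fin 6) (Fin 6) k) (a b : Fin 6 → k) (hM1 : M1.IsSymm) (hM2 : M2.IsSymm) (s0 s1 : Fin 6 → k)
    (sa1 : a ⬝ᵥ M1 *ᵥ a = 0) (sb1 : b ⬝ᵥ M1 *ᵥ b = 0) (sab1 : a ⬝ᵥ M1 *ᵥ b = 0)
    (sa2 : a ⬝ᵥ M2 *ᵥ a = 0) (sb2 : b ⬝ᵥ M2 *ᵥ b = 0) (sab2 : a ⬝ᵥ M2 *ᵥ b = 0)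
    (e1a : (M1 *ᵥ a) ⬝ᵥ a = 0) (e1b : (M1 *ᵥ a) ⬝ᵥ b = 0)
    (f1a : (M1 *ᵥ b) ⬝ᵥ a = 0) (f1b : (M1 *ᵥ b) ⬝ᵥ b = 0)
    (e2a : (M2 *ᵥ a) ⬝ᵥ a = 0) (e2b : (M2 *ᵥ a) ⬝ᵥ b = 0)
    (f2a : (M2 *ᵥ b) ⬝ᵥ a = 0) (f2b : (M2 *ᵥ b) ⬝ᵥ b = 0) (j : Fin 6) :
    aeval (fun t => C (a t) * (-linF s0) + C (b t) * (-linF s1) + 1 * X t)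
      (linePP M1 M2 a b j) = linePP M1 M2 a b j := by
  simp only [linePP, lineAlpha, lineBeta, lineQQ, map_add, map_sub, _root_.map_mul,
    aeval_C, aeval_X, MvPolynomial.algebraMap_eq, map_ofNat]
  simp only [aeval_comb_quadric M1 hM1 a b, aeval_comb_quadric M2 hM2 a b,
    aeval_comb_linF (M1 *ᵥ a) a b, aeval_comb_linF (M1 *ᵥ b) a b,
    aeval_comb_linF (M2 *ᵥ a) a b, aeval_comb_linF (M2 *ᵥ b) a b]
  rw [sa1, sb1, sab1, sa2, sb2, sab2, e1a, e1b, f1a, f1b, e2a, e2b, f2a, f2b]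
  simp only [map_zero, zero_mul, mul_zero, add_zero, zero_add, neg_zero]
  ring

end Stmt11Aux

open Stmt11Aux in
set_option maxHeartbeats 2000000 in
/-- Let `X = Q1 ∩ Q2 ⊂ ℙ^5_k` be a smooth complete intersection of two quadrics over a
field `k` of characteristic `≠ 2` (smoothness via the Jacobian criterion over the
algebraic closure).  If `X` contains a `k`-rational line (the projectivization of the
span of linearly independent `a, b ∈ k^6` on which both quadrics vanish), then `X` is
`k`-rational: there exist mutually inverse rational maps `ℙ^3 ⇢ X ⊂ ℙ^5` and
`X ⇢ ℙ^3`, given by tuples of homogeneous polynomials `F`, `G` such that `F` lands in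
`X`, `G ∘ F` is the identity of `ℙ^3` up to a nonzero scalar polynomial `h`, and
`F ∘ G` is the identity up to a polynomial `h'` invertible on `X` (i.e. `h'` not in the
ideal of `X`), working modulo the ideal of `X`. -/
theorem stmt_11 (k : Type*) [Field k] (hchar : ringChar k ≠ 2)
    (M1 M2 : Matrix (Fin 6) (Fin 6) k) (hM1 : M1.IsSymm) (hM2 : M2.IsSymm)
    (hsmooth : ∀ v : Fin 6 → AlgebraicClosure k, v ≠ 0 →
      v ⬝ᵥ (M1.map (algebraMap k (AlgebraicClosure k))).mulVec v = 0 →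
      v ⬝ᵥ (M2.map (algebraMap k (AlgebraicClosure k))).mulVec v = 0 →
      LinearIndependent (AlgebraicClosure k)
        ![(M1.map (algebraMap k (AlgebraicClosure k))).mulVec v,
          (M2.map (algebraMap k (AlgebraicClosure k))).mulVec v])
    (a b : Fin 6 → k) (hab : LinearIndependent k ![a, b])
    (hline : ∀ r s : k,
      (r • a + s • b) ⬝ᵥ M1.mulVec (r • a + s • b) = 0 ∧
      (r • a + s • b) ⬝ᵥ M2.mulVec (r • a + s • b) = 0) :
    ∃ (d e : ℕ) (F : Fin 6 → MvPolynomial (Fin 4) k) (G : Fin 4 → MvPolynomial (Fin 6) k)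
      (h : MvPolynomial (Fin 4) k) (h' : MvPolynomial (Fin 6) k),
      (∀ i, (F i).IsHomogeneous d) ∧ (∀ j, (G j).IsHomogeneous e) ∧
      -- F maps ℙ^3 into X
      aeval F (quadricPoly M1) = 0 ∧ aeval F (quadricPoly M2) = 0 ∧
      -- G ∘ F = id on ℙ^3, up to the nonzero scalar h
      h ≠ 0 ∧ (∀ i : Fin 4, aeval F (G i) = h * X i) ∧
      -- F ∘ G = id on X, up to the scalar h' which does not vanish on X
      h' ∉ Ideal.span {quadricPoly M1, quadricPoly M2} ∧
      (∀ j : Fin 6,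
        aeval G (F j) - h' * X j ∈ Ideal.span {quadricPoly M1, quadricPoly M2}) := by
  classical
  haveI := ringChar.charP k
  have h2 : (2 : k) ≠ 0 := by
    intro h20
    have hd : ringChar k ∣ 2 :=
      (CharP.cast_eq_zero_iff k (ringChar k) 2).mp (by exact_mod_cast h20)
    rcases Nat.prime_two.eq_one_or_self_of_dvd _ hd with h1 | h1
    · exact CharP.char_ne_one k (ringChar k) h1
    · exact hchar h1
  have symmdot : ∀ M : Matrix (Fin 6) (Fin 6) k, M.IsSymm → ∀ x y : Fin 6 → k,
      x ⬝ᵥ M *ᵥ y = y ⬝ᵥ M *ᵥ x := by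
    intro M hM x y
    rw [Matrix.dotProduct_mulVec, ← Matrix.mulVec_transpose, hM, dotProduct_comm]
  have key : ∀ M : Matrix (Fin 6) (Fin 6) k, M.IsSymm →
      (∀ r s : k, (r • a + s • b) ⬝ᵥ M *ᵥ (r • a + s • b) = 0) →
      a ⬝ᵥ M *ᵥ a = 0 ∧ b ⬝ᵥ M *ᵥ b = 0 ∧ a ⬝ᵥ M *ᵥ b = 0 := by
    intro M hM h
    have ha' := h 1 0
    have hb' := h 0 1
    have hab' := h 1 1
    simp only [one_smul, zero_smul, add_zero, zero_add] at ha' hb' hab'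
    refine ⟨ha', hb', ?_⟩
    have hexp : a ⬝ᵥ M *ᵥ a + a ⬝ᵥ M *ᵥ b + (b ⬝ᵥ M *ᵥ a + b ⬝ᵥ M *ᵥ b) = 0 := by
      rw [Matrix.mulVec_add, add_dotProduct, dotProduct_add,
        dotProduct_add] at hab'
      linear_combination hab'
    rw [symmdot M hM b a, ha', hb'] at hexp
    have h22 : 2 * (a ⬝ᵥ M *ᵥ b) = 0 := by linear_combination hexp
    rcases mul_eq_zero.mp h22 with hh | hh
    · exact absurd hh h2
    · exact hh
  obtain ⟨sa1, sb1, sab1⟩ := key M1 hM1 fun r s => (hline r s).1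
  obtain ⟨sa2, sb2, sab2⟩ := key M2 hM2 fun r s => (hline r s).2
  have du : ∀ M : Matrix (Fin 6) (Fin 6) k, M.IsSymm → a ⬝ᵥ M *ᵥ a = 0 →
      b ⬝ᵥ M *ᵥ b = 0 → a ⬝ᵥ M *ᵥ b = 0 →
      (M *ᵥ a) ⬝ᵥ a = 0 ∧ (M *ᵥ a) ⬝ᵥ b = 0 ∧ (M *ᵥ b) ⬝ᵥ a = 0 ∧ (M *ᵥ b) ⬝ᵥ b = 0 := by
    intro M hM h1 h2' h3
    refine ⟨?_, ?_, ?_, ?_⟩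
    · rw [dotProduct_comm]; exact h1
    · rw [dotProduct_comm, symmdot M hM b a]; exact h3
    · rw [dotProduct_comm]; exact h3
    · rw [dotProduct_comm]; exact h2'
  obtain ⟨e1a, e1b, f1a, f1b⟩ := du M1 hM1 sa1 sb1 sab1
  obtain ⟨e2a, e2b, f2a, f2b⟩ := du M2 hM2 sa2 sb2 sab2
  -- any nontrivial dependence between M1 v, M2 v at a point v of the line is impossible
  have dep : ∀ r s c1 c2 : k, ¬(r = 0 ∧ s = 0) → ¬(c1 = 0 ∧ c2 = 0) →
      c1 • (M1 *ᵥ (r • a + s • b)) + c2 • (M2 *ᵥ (r • a + s • b)) = 0 → False := by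
    intro r s c1 c2 hrs hc hrel
    have hv0 : (r • a + s • b) ≠ 0 := by
      intro h0
      apply hrs
      have hli := Fintype.linearIndependent_iff.mp hab ![r, s] ?_
      · exact ⟨hli 0, hli 1⟩
      · rw [Fin.sum_univ_two]
        simpa using h0
    set ι := algebraMap k (AlgebraicClosure k) with hι
    have hinj : Function.Injective ι := ι.injective
    have hmapv : ∀ (M : Matrix (Fin 6) (Fin 6) k) (v : Fin 6 → k),
        (M.map ι) *ᵥ (fun i => ι (v i)) = fun i => ι ((M *ᵥ v) i) := by
      intro M v; funext i
      simp [Matrix.mulVec, dotProduct, Matrix.map_apply, map_sum, _root_.map_mul]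
    have hdotv : ∀ v w : Fin 6 → k,
        (fun i => ι (v i)) ⬝ᵥ (fun i => ι (w i)) = ι (v ⬝ᵥ w) := by
      intro v w; simp [dotProduct, map_sum, _root_.map_mul]
    have hv0' : (fun i => ι ((r • a + s • b) i)) ≠ 0 := by
      intro h0
      apply hv0
      funext i
      have h0i := congrFun h0 i
      simp only [Pi.zero_apply] at h0i
      exact hinj (by simpa using h0i)
    have hQ1 : (fun i => ι ((r • a + s • b) i)) ⬝ᵥ
        (M1.map ι) *ᵥ (fun i => ι ((r • a + s • b) i)) = 0 := by
      rw [hmapv, hdotv, (hline r s).1, map_zero]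
    have hQ2 : (fun i => ι ((r • a + s • b) i)) ⬝ᵥ
        (M2.map ι) *ᵥ (fun i => ι ((r • a + s • b) i)) = 0 := by
      rw [hmapv, hdotv, (hline r s).2, map_zero]
    have hli := hsmooth _ hv0' hQ1 hQ2
    have hz := Fintype.linearIndependent_iff.mp hli ![ι c1, ι c2] ?_
    · exact hc ⟨hinj (by simpa using hz 0), hinj (by simpa using hz 1)⟩
    · rw [Fin.sum_univ_two]
      simp only [Matrix.cons_val_zero, Matrix.cons_val_one, Matrix.head_cons]
      rw [hmapv M1, hmapv M2]
      funext i
      have hri := congrFun hrel i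
      simp only [Pi.add_apply, Pi.smul_apply, smul_eq_mul, Pi.zero_apply] at hri ⊢
      rw [← _root_.map_mul, ← _root_.map_mul, ← map_add, hri, map_zero]
  -- the quadratic form lineQQ does not vanish identically (as a function)
  have L1 : ¬ (∀ x : Fin 6 → k,
      ((M1 *ᵥ a) ⬝ᵥ x) * ((M2 *ᵥ b) ⬝ᵥ x) = ((M2 *ᵥ a) ⬝ᵥ x) * ((M1 *ᵥ b) ⬝ᵥ x)) := by
    intro H
    by_cases hu1 : (M1 *ᵥ a) = 0
    · refine dep 1 0 1 0 (by simp) (by simp) ?_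
      simp [hu1]
    · have split : (∀ x, (M1 *ᵥ a) ⬝ᵥ x = 0 → (M2 *ᵥ a) ⬝ᵥ x = 0)
          ∨ (∀ x, (M1 *ᵥ a) ⬝ᵥ x = 0 → (M1 *ᵥ b) ⬝ᵥ x = 0) := by
        by_cases hA : ∀ x, (M1 *ᵥ a) ⬝ᵥ x = 0 → (M2 *ᵥ a) ⬝ᵥ x = 0
        · exact Or.inl hA
        · right
          push_neg at hA
          obtain ⟨x, hx1, hx2⟩ := hA
          have hw1x : (M1 *ᵥ b) ⬝ᵥ x = 0 := by
            have hH := H x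
            rw [hx1, zero_mul] at hH
            exact (mul_eq_zero.mp hH.symm).resolve_left hx2
          intro y hy1
          by_contra hw
          have hu2y : (M2 *ᵥ a) ⬝ᵥ y = 0 := by
            have hH := H y
            rw [hy1, zero_mul] at hH
            rcases mul_eq_zero.mp hH.symm with h | h
            · exact h
            · exact absurd h hw
          have hz := H (x + y)
          rw [dotProduct_add, dotProduct_add, dotProduct_add, dotProduct_add,
            hx1, hy1, hw1x, hu2y] at hz
          simp only [zero_add, add_zero, zero_mul] at hz
          exact (mul_ne_zero hx2 hw) hz.symm
      rcases split with hS | hS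
      · obtain ⟨c, hc⟩ := ker_incl hu1 hS
        refine dep 1 0 (-c) 1 (by simp) (by simp) ?_
        simp only [one_smul, zero_smul, add_zero]
        rw [hc]
        funext i
        simp only [Pi.add_apply, Pi.smul_apply, smul_eq_mul, Pi.zero_apply]
        ring
      · obtain ⟨c, hc⟩ := ker_incl hu1 hS
        refine dep (-c) 1 1 0 (by simp) (by simp) ?_
        simp only [one_smul, zero_smul, add_zero]
        rw [Matrix.mulVec_add, Matrix.mulVec_smul, hc]
        funext i
        simp only [Pi.add_apply, Pi.smul_apply, smul_eq_mul, Pi.zero_apply]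
        ring
  -- projection data
  obtain ⟨Yc, Gm, s0, s1, hR1, hR2, hGa, hGb⟩ := exists_proj a b hab
  -- composition of substitutions
  have hcomp : ∀ {n₁ n₂ n₃ : ℕ} (f : Fin n₁ → MvPolynomial (Fin n₂) k)
      (g : Fin n₂ → MvPolynomial (Fin n₃) k) (p : MvPolynomial (Fin n₁) k),
      aeval (fun i => aeval g (f i)) p = aeval g (aeval f p) := by
    intro n₁ n₂ n₃ f g p
    rw [← MvPolynomial.comp_aeval]
    rfl
  -- the composed substitution G ∘ Y is the linear projection-retraction
  have hZfun : (fun t => aeval (fun i => linF (Gm i)) (linF (Yc t)))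
      = fun t => C (a t) * (-linF s0) + C (b t) * (-linF s1) + 1 * X t := by
    funext t
    rw [aeval_linF]
    have step1 : (∑ i, C (Yc t i) * linF (Gm i) : MvPolynomial (Fin 6) k)
        = ∑ j, C ((Yc * Gm) t j) * X j := by
      simp only [linF, Finset.mul_sum]
      rw [Finset.sum_comm]
      refine Finset.sum_congr rfl fun j _ => ?_
      rw [Matrix.mul_apply, map_sum, Finset.sum_mul]
      refine Finset.sum_congr rfl fun i _ => ?_
      rw [C_mul]; ring
    rw [step1]
    have step2 : ∀ j : Fin 6, (C ((Yc * Gm) t j) * X j : MvPolynomial (Fin 6) k)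
        = C (if t = j then (1 : k) else 0) * X j
          - C (a t) * (C (s0 j) * X j) - C (b t) * (C (s1 j) * X j) := by
      intro j
      rw [hR2 t j, C_sub, C_sub, C_mul, C_mul]
      ring
    rw [Finset.sum_congr rfl fun j _ => step2 j]
    rw [Finset.sum_sub_distrib, Finset.sum_sub_distrib, sum_C_ite]
    simp only [linF, Finset.mul_sum, mul_neg, neg_mul, one_mul]
    ring
  -- G ∘ F fixes linePP
  have hGF : ∀ j, aeval (fun i => linF (Gm i))
      (aeval (fun t => linF (Yc t)) (linePP M1 M2 a b j)) = linePP M1 M2 a b j := by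
    intro j
    rw [← hcomp (fun t => linF (Yc t)) (fun i => linF (Gm i)) (linePP M1 M2 a b j)]
    rw [hZfun]
    exact aeval_lineZZ M1 M2 a b hM1 hM2 s0 s1 sa1 sb1 sab1 sa2 sb2 sab2
      e1a e1b f1a f1b e2a e2b f2a f2b j
  -- ∑ⱼ C (Gm i j) * Y j = X i
  have hGY : ∀ i : Fin 4, (∑ j, C (Gm i j) * linF (Yc j) : MvPolynomial (Fin 4) k) = X i := by
    intro i
    simp only [linF, Finset.mul_sum]
    rw [Finset.sum_comm]
    have hstep : ∀ t : Fin 4, (∑ j, C (Gm i j) * (C (Yc j t) * X t) : MvPolynomial (Fin 4) k)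
        = C ((Gm * Yc) i t) * X t := by
      intro t
      rw [Matrix.mul_apply, map_sum, Finset.sum_mul]
      refine Finset.sum_congr rfl fun j _ => ?_
      rw [C_mul]; ring
    rw [Finset.sum_congr rfl fun t _ => hstep t, hR1]
    have : ∀ t : Fin 4, ((1 : Matrix (Fin 4) (Fin 4) k) i t) = if i = t then (1:k) else 0 :=
      fun t => Matrix.one_apply
    simp only [this]
    exact sum_C_ite i
  -- F ∘ G = h · X i
  have hFG : ∀ i : Fin 4, aeval (fun j => aeval (fun t => linF (Yc t)) (linePP M1 M2 a b j))
      (linF (Gm i))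
      = (2 * aeval (fun t => linF (Yc t)) (lineQQ M1 M2 a b)) * X i := by
    intro i
    rw [aeval_linF]
    have hFj : ∀ j, aeval (fun t => linF (Yc t)) (linePP M1 M2 a b j)
        = C (a j) * aeval (fun t => linF (Yc t)) (lineAlpha M1 M2 a b)
          + C (b j) * aeval (fun t => linF (Yc t)) (lineBeta M1 M2 a b)
          + (2 * aeval (fun t => linF (Yc t)) (lineQQ M1 M2 a b)) * linF (Yc j) := by
      intro j
      simp only [linePP, map_add, _root_.map_mul, aeval_C,
        MvPolynomial.algebraMap_eq, aeval_X, map_ofNat]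
    calc (∑ j, C (Gm i j) * aeval (fun t => linF (Yc t)) (linePP M1 M2 a b j))
        = ∑ j, (C (Gm i j * a j) * aeval (fun t => linF (Yc t)) (lineAlpha M1 M2 a b)
            + C (Gm i j * b j) * aeval (fun t => linF (Yc t)) (lineBeta M1 M2 a b)
            + (2 * aeval (fun t => linF (Yc t)) (lineQQ M1 M2 a b))
                * (C (Gm i j) * linF (Yc j))) := by
          refine Finset.sum_congr rfl fun j _ => ?_
          rw [hFj j, C_mul, C_mul]
          ring
      _ = C (Gm i ⬝ᵥ a) * aeval (fun t => linF (Yc t)) (lineAlpha M1 M2 a b)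
            + C (Gm i ⬝ᵥ b) * aeval (fun t => linF (Yc t)) (lineBeta M1 M2 a b)
            + (2 * aeval (fun t => linF (Yc t)) (lineQQ M1 M2 a b))
                * (∑ j, C (Gm i j) * linF (Yc j)) := by
          rw [Finset.sum_add_distrib, Finset.sum_add_distrib, ← Finset.sum_mul,
            ← Finset.sum_mul, ← Finset.mul_sum, ← map_sum, ← map_sum]
          rfl
      _ = (2 * aeval (fun t => linF (Yc t)) (lineQQ M1 M2 a b)) * X i := by
          have hza : Gm i ⬝ᵥ a = 0 := congrFun hGa i
          have hzb : Gm i ⬝ᵥ b = 0 := congrFun hGb i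
          rw [hza, hzb, hGY i, map_zero, zero_mul, zero_mul, zero_add, zero_add]
  -- evaluation of a substituted polynomial
  have evalYf : ∀ (u : Fin 4 → k) (p : MvPolynomial (Fin 6) k),
      eval u (aeval (fun t => linF (Yc t)) p) = eval (fun t => Yc t ⬝ᵥ u) p := by
    intro u p
    induction p using MvPolynomial.induction_on with
    | C c => rw [aeval_C, eval_C, MvPolynomial.algebraMap_eq, eval_C]
    | add p q hp hq => simp only [map_add, hp, hq]
    | mul_X p i hp => simp only [_root_.map_mul, hp, aeval_X, eval_X, eval_linF]
  have heval_qq : ∀ x : Fin 6 → k, eval x (lineQQ M1 M2 a b)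
      = ((M1 *ᵥ a) ⬝ᵥ x) * ((M2 *ᵥ b) ⬝ᵥ x) - ((M2 *ᵥ a) ⬝ᵥ x) * ((M1 *ᵥ b) ⬝ᵥ x) := by
    intro x
    simp [lineQQ, map_sub, _root_.map_mul, eval_linF]
  -- nonvanishing of the restricted discriminant
  have hq4 : aeval (fun t => linF (Yc t)) (lineQQ M1 M2 a b) ≠ 0 := by
    intro h0
    apply L1
    intro x
    have h1 : eval (fun t => Yc t ⬝ᵥ (Gm *ᵥ x)) (lineQQ M1 M2 a b) = 0 := by
      rw [← evalYf (Gm *ᵥ x), h0, map_zero]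
    have hxx : (fun t => Yc t ⬝ᵥ (Gm *ᵥ x))
        = (x - (s0 ⬝ᵥ x) • a - (s1 ⬝ᵥ x) • b) := by
      funext t
      have hmm : Yc t ⬝ᵥ (Gm *ᵥ x) = ((Yc * Gm) *ᵥ x) t := by
        rw [← Matrix.mulVec_mulVec]
        rfl
      rw [hmm]
      show (∑ j, (Yc * Gm) t j * x j) = _
      rw [Finset.sum_congr rfl fun j _ => by rw [hR2 t j]]
      simp only [sub_mul, ite_mul, one_mul, zero_mul]
      rw [Finset.sum_sub_distrib, Finset.sum_sub_distrib]
      simp only [Finset.sum_ite_eq, Finset.mem_univ, if_true]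
      have ea : (∑ j, a t * s0 j * x j) = a t * (s0 ⬝ᵥ x) := by
        rw [dotProduct, Finset.mul_sum]
        exact Finset.sum_congr rfl fun j _ => by ring
      have eb : (∑ j, b t * s1 j * x j) = b t * (s1 ⬝ᵥ x) := by
        rw [dotProduct, Finset.mul_sum]
        exact Finset.sum_congr rfl fun j _ => by ring
      rw [ea, eb]
      simp only [Pi.sub_apply, Pi.smul_apply, smul_eq_mul]
      ring
    rw [hxx, heval_qq] at h1
    have hmod : ∀ w : Fin 6 → k, w ⬝ᵥ a = 0 → w ⬝ᵥ b = 0 →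
        w ⬝ᵥ (x - (s0 ⬝ᵥ x) • a - (s1 ⬝ᵥ x) • b) = w ⬝ᵥ x := by
      intro w hwa hwb
      rw [dotProduct_sub, dotProduct_sub, dotProduct_smul, dotProduct_smul, hwa, hwb]
      simp
    rw [hmod _ e1a e1b, hmod _ f2a f2b, hmod _ e2a e2b, hmod _ f1a f1b] at h1
    linear_combination h1
  -- the discriminant is not in the ideal
  have hnotmem : (2 * lineQQ M1 M2 a b : MvPolynomial (Fin 6) k)
      ∉ Ideal.span {quadricPoly M1, quadricPoly M2} := by
    intro hmem
    have hqmem : lineQQ M1 M2 a b ∈ Ideal.span {quadricPoly M1, quadricPoly M2} := by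
      have h3 := Ideal.mul_mem_left _ (C (2:k)⁻¹) hmem
      have h4 : (C ((2:k)⁻¹) * (2 * lineQQ M1 M2 a b) : MvPolynomial (Fin 6) k)
          = lineQQ M1 M2 a b := by
        rw [show (2 : MvPolynomial (Fin 6) k) = C 2 from (map_ofNat C 2).symm,
          ← mul_assoc, ← C_mul, inv_mul_cancel₀ h2, C_1, one_mul]
      rwa [h4] at h3
    obtain ⟨p1, p2, hp⟩ := Ideal.mem_span_pair.mp hqmem
    have hcomp2 := congrArg (homogeneousComponent 2) hp
    rw [map_add, hc2_mul p1 _ (quadricPoly_isHomogeneous M1),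
      hc2_mul p2 _ (quadricPoly_isHomogeneous M2)] at hcomp2
    have hqq2 : homogeneousComponent 2 (lineQQ M1 M2 a b) = lineQQ M1 M2 a b := by
      have hh : (lineQQ M1 M2 a b).IsHomogeneous 2 := by
        apply MvPolynomial.IsHomogeneous.sub
        · simpa using (linF_isHomogeneous (M1 *ᵥ a)).mul (linF_isHomogeneous (M2 *ᵥ b))
        · simpa using (linF_isHomogeneous (M2 *ᵥ a)).mul (linF_isHomogeneous (M1 *ᵥ b))
      rw [homogeneousComponent_of_mem ((mem_homogeneousSubmodule _ _).mpr hh)]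
      simp
    rw [hqq2] at hcomp2
    by_cases hc : p1.coeff 0 = 0 ∧ p2.coeff 0 = 0
    · apply L1
      intro x
      have h0 : lineQQ M1 M2 a b = 0 := by
        rw [← hcomp2, hc.1, hc.2]
        simp
      have hx := heval_qq x
      rw [h0, map_zero] at hx
      linear_combination -hx
    · have hpolar : ∀ t : Fin 6 → k,
          2 * (p1.coeff 0 * ((M1 *ᵥ a) ⬝ᵥ t) + p2.coeff 0 * ((M2 *ᵥ a) ⬝ᵥ t)) = 0 := by
        intro t
        have hat := congrArg (eval (a + t)) hcomp2
        have ht := congrArg (eval t) hcomp2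
        rw [map_add, _root_.map_mul, _root_.map_mul, eval_C, eval_C,
          eval_quadricPoly, eval_quadricPoly, heval_qq] at hat ht
        rw [Matrix.mulVec_add, Matrix.mulVec_add, dotProduct_add,
          dotProduct_add, add_dotProduct, add_dotProduct,
          add_dotProduct, add_dotProduct,
          dotProduct_add, dotProduct_add, dotProduct_add, dotProduct_add,
          sa1, sa2, e1a, e2a, f1a, f2a,
          symmdot M1 hM1 a t, symmdot M2 hM2 a t,
          dotProduct_comm t (M1 *ᵥ a), dotProduct_comm t (M2 *ᵥ a)] at hat
        linear_combination hat - ht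
      have hrel : p1.coeff 0 • (M1 *ᵥ a) + p2.coeff 0 • (M2 *ᵥ a) = 0 := by
        funext j
        have hpj := hpolar (Pi.single j 1 : Fin 6 → k)
        rw [dotProduct_single, dotProduct_single] at hpj
        simp only [mul_one] at hpj
        rcases mul_eq_zero.mp hpj with h | h
        · exact absurd h h2
        · simpa [Pi.add_apply, Pi.smul_apply, Pi.zero_apply, smul_eq_mul] using h
      refine dep 1 0 (p1.coeff 0) (p2.coeff 0) (by simp) hc ?_
      simpa using hrel
  refine ⟨3, 1,
    fun j => aeval (fun t => linF (Yc t)) (linePP M1 M2 a b j),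
    fun i => linF (Gm i),
    2 * aeval (fun t => linF (Yc t)) (lineQQ M1 M2 a b),
    2 * lineQQ M1 M2 a b,
    ?_, ?_, ?_, ?_, ?_, ?_, ?_, ?_⟩
  · -- homogeneity of F
    intro j
    have hY : ∀ t, (linF (Yc t) : MvPolynomial (Fin 4) k).IsHomogeneous 1 :=
      fun t => linF_isHomogeneous _
    have hA : (lineAlpha M1 M2 a b).IsHomogeneous 3 := by
      apply MvPolynomial.IsHomogeneous.sub
      · simpa using (quadricPoly_isHomogeneous M2).mul (linF_isHomogeneous (M1 *ᵥ b))
      · simpa using (quadricPoly_isHomogeneous M1).mul (linF_isHomogeneous (M2 *ᵥ b))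
    have hB : (lineBeta M1 M2 a b).IsHomogeneous 3 := by
      apply MvPolynomial.IsHomogeneous.sub
      · simpa using (linF_isHomogeneous (M2 *ᵥ a)).mul (quadricPoly_isHomogeneous M1)
      · simpa using (linF_isHomogeneous (M1 *ᵥ a)).mul (quadricPoly_isHomogeneous M2)
    have hqh : (lineQQ M1 M2 a b).IsHomogeneous 2 := by
      apply MvPolynomial.IsHomogeneous.sub
      · simpa using (linF_isHomogeneous (M1 *ᵥ a)).mul (linF_isHomogeneous (M2 *ᵥ b))
      · simpa using (linF_isHomogeneous (M2 *ᵥ a)).mul (linF_isHomogeneous (M1 *ᵥ b))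
    have hP3 : (linePP M1 M2 a b j).IsHomogeneous 3 := by
      have t1 : (C (a j) * lineAlpha M1 M2 a b : MvPolynomial (Fin 6) k).IsHomogeneous 3 :=
        hA.C_mul _
      have t2 : (C (b j) * lineBeta M1 M2 a b : MvPolynomial (Fin 6) k).IsHomogeneous 3 :=
        hB.C_mul _
      have t3 : ((2 * lineQQ M1 M2 a b) * X j : MvPolynomial (Fin 6) k).IsHomogeneous 3 := by
        have h2q : ((2 : MvPolynomial (Fin 6) k) * lineQQ M1 M2 a b).IsHomogeneous 2 := by
          rw [show (2 : MvPolynomial (Fin 6) k) = C 2 from (map_ofNat C 2).symm]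
          exact hqh.C_mul 2
        simpa using h2q.mul (isHomogeneous_X k j)
      exact (t1.add t2).add t3
    simpa using hP3.aeval _ hY
  · intro i
    exact linF_isHomogeneous _
  · rw [hcomp (linePP M1 M2 a b) (fun t => linF (Yc t)),
      (aeval_linePP_quadric M1 M2 a b hM1 hM2 sa1 sb1 sab1 sa2 sb2 sab2).1, map_zero]
  · rw [hcomp (linePP M1 M2 a b) (fun t => linF (Yc t)),
      (aeval_linePP_quadric M1 M2 a b hM1 hM2 sa1 sb1 sab1 sa2 sb2 sab2).2, map_zero]
  · -- h ≠ 0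
    intro h0
    rcases mul_eq_zero.mp h0 with h | h
    · rw [show (2 : MvPolynomial (Fin 4) k) = C 2 from (map_ofNat C 2).symm] at h
      exact h2 (by simpa using h)
    · exact hq4 h
  · exact hFG
  · exact hnotmem
  · intro j
    rw [hGF j]
    have hsplit : linePP M1 M2 a b j - 2 * lineQQ M1 M2 a b * X j
        = (C (b j) * linF (M2 *ᵥ a) - C (a j) * linF (M2 *ᵥ b)) * quadricPoly M1
          + (C (a j) * linF (M1 *ᵥ b) - C (b j) * linF (M1 *ᵥ a)) * quadricPoly M2 := by
      simp only [linePP, lineAlpha, lineBeta, lineQQ]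
      ring
    rw [hsplit]
    exact Ideal.mem_span_pair.mpr ⟨_, _, rfl⟩
end
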